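/- Let P be a probability measure on a measurable space U and π a measurable possibility contour such that every α-cut C_α = {u : π(u) ≥ α} is measurable. If P(C_α) ≥ 1 − α for every α ∈ [0,1], then P(K) ≤ Π(K) for every measurable set K with Π(K) < 1, where Π(K) = sup_{u ∈ K} π(u). -/
import Mathlib


open Set MeasureTheory

/-- If a probability measure `P` assigns probability at least `1 − α`
to every `α`-cut `C_α = {u : π(u) ≥ α}` of a possibility contour `π`, then
`P(K) ≤ Π(K)` for every measurable `K` with `Π(K) < 1`, where
`Π(K) = sup_{u ∈ K} π(u)`. -/
theorem credal_of_alpha_cuts {U : Type*} [MeasurableSpace U]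
    (P : Measure U) [IsProbabilityMeasure P]
    (π : U → ℝ) (hπmeas : Measurable π) (hπ : ∀ u, π u ∈ Set.Icc (0 : ℝ) 1)
    (hcuts : ∀ α ∈ Set.Icc (0 : ℝ) 1, ENNReal.ofReal (1 - α) ≤ P {u | α ≤ π u}) :
    ∀ K : Set U, MeasurableSet K → sSup (π '' K) < 1 →
      P K ≤ ENNReal.ofReal (sSup (π '' K)) := by
  intro K hK hs
  set s := sSup (π '' K) with hsdef
  rcases K.eq_empty_or_nonempty with rfl | hne
  · simp
  have hbdd : BddAbove (π '' K) := by
    refine ⟨1, ?_⟩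
    rintro x ⟨v, _, rfl⟩
    exact (hπ v).2
  have hs0 : 0 ≤ s := by
    obtain ⟨u, hu⟩ := hne
    exact le_trans (hπ u).1 (le_csSup hbdd ⟨u, hu, rfl⟩)
  have key : ∀ α : ℝ, s < α → α ≤ 1 → P K ≤ ENNReal.ofReal α := by
    intro α hα hα1
    have hα0 : 0 ≤ α := le_trans hs0 hα.le
    have hsub : K ⊆ {u | α ≤ π u}ᶜ := by
      intro u hu
      simp only [mem_compl_iff, mem_setOf_eq, not_le]
      exact lt_of_le_of_lt (le_csSup hbdd ⟨u, hu, rfl⟩) hα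
    have hCmeas : MeasurableSet {u | α ≤ π u} := hπmeas measurableSet_Ici
    have hcomp : P {u | α ≤ π u}ᶜ ≤ ENNReal.ofReal α := by
      rw [prob_compl_eq_one_sub hCmeas]
      calc 1 - P {u | α ≤ π u} ≤ 1 - ENNReal.ofReal (1 - α) :=
            tsub_le_tsub_left (hcuts α ⟨hα0, hα1⟩) 1
        _ = ENNReal.ofReal α := by
            rw [← ENNReal.ofReal_one, ← ENNReal.ofReal_sub _ (by linarith)]
            norm_num
    exact le_trans (measure_mono hsub) hcomp
  refine ENNReal.le_of_forall_pos_le_add fun ε hε _ => ?_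
  have hε' : (0 : ℝ) < ε := hε
  set α := min 1 (s + ε) with hαdef
  have h1 : s < α := lt_min hs (by linarith)
  calc P K ≤ ENNReal.ofReal α := key α h1 (min_le_left _ _)
    _ ≤ ENNReal.ofReal (s + ε) := ENNReal.ofReal_le_ofReal (min_le_right _ _)
    _ = ENNReal.ofReal s + ENNReal.ofReal ε := ENNReal.ofReal_add hs0 hε'.le
    _ ≤ ENNReal.ofReal s + ε := by
        gcongr
        exact le_of_eq ENNReal.ofReal_coe_nnreal
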